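/- arXiv:1005.3835 — 2 statements merged into one kernel-verified Lean document; each statement's English description precedes it below -/
import Mathlib

section
/- Let α > 1 and β > 0 be real numbers, let B > 0 be a real number, and let x and B' be real numbers with 0 ≤ x ≤ B·β/(α+β) and B' ≥ B. Then ((x + B')·α)/(x + B'·α) ≤ (α² + 2·α·β)/(α² + α·β + β). -/
theorem stmt_0 (α β B x B' : ℝ) (hα : 1 < α) (hβ : 0 < β) (hB : 0 < B)
    (hx0 : 0 ≤ x) (hx : x ≤ B * β / (α + β)) (hB' : B ≤ B') :
    ((x + B') * α) / (x + B' * α) ≤ (α ^ 2 + 2 * α * β) / (α ^ 2 + α * β + β) := by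
  have hαβ : 0 < α + β := by linarith
  have hkey : x * (α + β) ≤ B' * β := by
    have h1 : x * (α + β) ≤ B * β := by
      rw [div_eq_mul_inv] at hx
      calc x * (α + β) ≤ (B * β * (α + β)⁻¹) * (α + β) := by nlinarith
        _ = B * β := by field_simp
    nlinarith
  have hd1 : 0 < x + B' * α := by nlinarith
  have hd2 : 0 < α ^ 2 + α * β + β := by nlinarith
  rw [div_le_div_iff₀ hd1 hd2]
  nlinarith [mul_le_mul_of_nonneg_left hkey (show (0:ℝ) ≤ α * (α - 1) by nlinarith)]
end

section
/- Let α > 1 and β > 0 be real numbers with α² − β·(β − 1)·α + β² + β > 0, let B > 0 be a real number, and let x and B' be real numbers with 0 ≤ x ≤ B·β/(α+β) and B' ≥ B. Then both ((x + B')·α)/(x + B'·α) ≤ (1 + β)/β and, for all real V > 0 and 0 ≤ P ≤ V/β, (P + V)/V ≤ (1 + β)/β; that is, under the quadratic condition the single bound (1 + β)/β dominates both the eviction-interval gain ratio and the preemption-interval gain ratio. -/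
theorem stmt_13 (α β B x B' : ℝ) (hα : 1 < α) (hβ : 0 < β)
    (hquad : α ^ 2 - β * (β - 1) * α + β ^ 2 + β > 0) (hB : 0 < B)
    (hx0 : 0 ≤ x) (hx : x ≤ B * β / (α + β)) (hB' : B ≤ B') :
    ((x + B') * α) / (x + B' * α) ≤ (1 + β) / β ∧
      ∀ V P : ℝ, 0 < V → 0 ≤ P → P ≤ V / β → (P + V) / V ≤ (1 + β) / β := by
  have hαβ : 0 < α + β := by linarith
  have hx' : x * (α + β) ≤ B * β := by
    rw [div_eq_mul_inv] at hx
    calc x * (α + β) ≤ B * β * (α + β)⁻¹ * (α + β) := by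
          exact mul_le_mul_of_nonneg_right hx (le_of_lt hαβ)
      _ = B * β := by field_simp
  have hB'0 : 0 < B' := lt_of_lt_of_le hB hB'
  constructor
  · have hden : 0 < x + B' * α := by nlinarith
    rw [div_le_div_iff₀ hden hβ]
    nlinarith [mul_le_mul_of_nonneg_left hB' (le_of_lt hβ), mul_pos hB'0 hβ,
      mul_nonneg hx0 (le_of_lt hβ), sq_nonneg (α - β)]
  · intro V P hV hP0 hP
    have hPβ : P * β ≤ V := by
      rw [le_div_iff₀ hβ] at hP; linarith
    rw [div_le_div_iff₀ hV hβ]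
    nlinarith
end
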